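/- Over effective RCMs with binary variables Z, X, Y, the assumptions of monotonicity (for all units u, X_{Z=0}(u)=1 → X_{Z=1}(u)=1), exclusion restriction (for all u, x, y: Y_{Z=0,X=x}(u)=y ↔ Y_{Z=1,X=x}(u)=y), and outcome decomposition (for all u, x, y: Y_{X=x}(u)=y ↔ Y_{Z=1,X=x}(u)=y) jointly entail LATE · ITT₂ = ITT₁, where LATE = E(Y_{X=1} − Y_{X=0} | X_{Z=1}=1 ∧ X_{Z=0}=0), ITT₂ = E(X_{Z=1} − X_{Z=0}), and ITT₁ = E(Y_{Z=1,X_{Z=1}} − Y_{Z=0,X_{Z=0}}). -/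
import Mathlib


open scoped Classical

/-- An intervention: a partial assignment of values to variables. -/
def Itv (V : Type*) (Val : V → Type*) := ∀ v, Option (Val v)

/-- A potential outcome `Y_x`: an outcome variable together with an intervention. -/
structure PO (V : Type*) (Val : V → Type*) where
  Y : V
  x : Itv V Val

/-- A Rubin causal model (with a probability distribution on its units). -/
structure RCM (U : Type*) (V : Type*) (Val : V → Type*) where
  O : Set (PO V Val)
  F : (o : PO V Val) → U → Val o.Y
  P : U → ℝ
  P_nonneg : ∀ u, 0 ≤ P u
  P_sum : ∑ᶠ u, P u = 1

/-- Joint valuations ("counterfactuals") of a set of potential outcomes. -/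
def CFVal {V : Type*} {Val : V → Type*} (O : Set (PO V Val)) :=
  (o : O) → Val o.1.Y

/-- The (pushforward) counterfactual distribution of an RCM, computed on a set
of potential outcomes. -/
noncomputable def RCM.cfOn {U V : Type*} {Val : V → Type*} (R : RCM U V Val)
    (O : Set (PO V Val)) (g : CFVal O) : ℝ :=
  ∑ᶠ u, if ∀ o : O, R.F o.1 u = g o then R.P u else 0

/-- The counterfactual distribution of an RCM on its own defined outcomes. -/
noncomputable def RCM.cf {U V : Type*} {Val : V → Type*} (R : RCM U V Val)
    (g : CFVal R.O) : ℝ := R.cfOn R.O g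

/-- Effectiveness: intervened variables take their intervened values. -/
def RCM.Effective {U V : Type*} {Val : V → Type*} (R : RCM U V Val) : Prop :=
  ∀ o, o ∈ R.O → ∀ u, ∀ y : Val o.Y, o.x o.Y = some y → R.F o u = y

/-- Update an intervention at one variable. -/
noncomputable def upd {V : Type*} {Val : V → Type*} (x : Itv V Val) (Y : V) (y : Val Y) :
    Itv V Val :=
  fun v => if h : v = Y then some (cast (congrArg Val h.symm) y) else x v

/-- Composition, at every unit, whenever the relevant outcomes are defined. -/
def RCM.Composition {U V : Type*} {Val : V → Type*} (R : RCM U V Val) : Prop :=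
  ∀ (u : U) (Y Z : V) (w : Itv V Val),
    (⟨Y, w⟩ : PO V Val) ∈ R.O → (⟨Z, w⟩ : PO V Val) ∈ R.O →
    (⟨Z, upd w Y (R.F ⟨Y, w⟩ u)⟩ : PO V Val) ∈ R.O →
    R.F ⟨Z, upd w Y (R.F ⟨Y, w⟩ u)⟩ u = R.F ⟨Z, w⟩ u

/-- Reversibility, at every unit, whenever the relevant outcomes are defined. -/
def RCM.Reversibility {U V : Type*} {Val : V → Type*} (R : RCM U V Val) : Prop :=
  ∀ (u : U) (Y Z : V) (w : Itv V Val) (y : Val Y) (z : Val Z), Y ≠ Z →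
    (⟨Y, upd w Z z⟩ : PO V Val) ∈ R.O → (⟨Z, upd w Y y⟩ : PO V Val) ∈ R.O →
    (⟨Y, w⟩ : PO V Val) ∈ R.O →
    R.F ⟨Y, upd w Z z⟩ u = y → R.F ⟨Z, upd w Y y⟩ u = z →
    R.F ⟨Y, w⟩ u = y

/-- A structural causal model. -/
structure SCM (Uex : Type*) (V : Type*) (Val : V → Type*) where
  Pa : V → Set V
  Pa_irr : ∀ v, v ∉ Pa v
  f : (v : V) → ((w : V) → Val w) → Uex → Val v
  f_dep : ∀ v a b u, (∀ w ∈ Pa v, a w = b w) → f v a u = f v b u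
  P : Uex → ℝ
  P_nonneg : ∀ u, 0 ≤ P u
  P_sum : ∑ᶠ u, P u = 1

/-- `s` solves the manipulated model `M_x` under exogenous setting `u`. -/
def SCM.IsSol {Uex V : Type*} {Val : V → Type*} (M : SCM Uex V Val)
    (x : Itv V Val) (u : Uex) (s : ∀ w, Val w) : Prop :=
  ∀ w, s w = (x w).getD (M.f w s u)

/-- `M` has a unique solution under every intervention and exogenous setting. -/
def SCM.Uniq {Uex V : Type*} {Val : V → Type*} (M : SCM Uex V Val) : Prop :=
  ∀ (x : Itv V Val) (u : Uex), ∃! s, M.IsSol x u s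

/-- The potential outcome `Y_x(u)` of an SCM with unique solutions. -/
noncomputable def SCM.po {Uex V : Type*} {Val : V → Type*} (M : SCM Uex V Val)
    (h : M.Uniq) (o : PO V Val) (u : Uex) : Val o.Y :=
  (h o.x u).exists.choose o.Y

/-- The counterfactual distribution of an SCM on a set of potential outcomes. -/
noncomputable def SCM.cf {Uex V : Type*} {Val : V → Type*} (M : SCM Uex V Val)
    (h : M.Uniq) (O : Set (PO V Val)) (g : CFVal O) : ℝ :=
  ∑ᶠ u, if ∀ o : O, M.po h o.1 u = g o then M.P u else 0

/-- `M` represents `R`: the counterfactual distribution of `M` marginalizes to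
that of `R` on the outcomes defined by `R`. -/
def Represents {Uex U V : Type*} {Val : V → Type*} (M : SCM Uex V Val) (h : M.Uniq)
    (R : RCM U V Val) : Prop :=
  ∀ g : CFVal R.O, M.cf h R.O g = R.cf g

/-- `R` is representable by some SCM with unique solutions. -/
def RCM.Representable {U V : Type*} {Val : V → Type*} (R : RCM U V Val) : Prop :=
  ∃ (Uex : Type) (M : SCM Uex V Val) (h : M.Uniq), Finite Uex ∧ Represents M h R

/-- `R'` extends `R`. -/
def RCM.Extends {U V : Type*} {Val : V → Type*} (R' R : RCM U V Val) : Prop :=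
  R.O ⊆ R'.O ∧ (∀ o ∈ R.O, R'.F o = R.F o) ∧ R'.P = R.P

/-- A full RCM defines every potential outcome. -/
def RCM.Full {U V : Type*} {Val : V → Type*} (R : RCM U V Val) : Prop :=
  R.O = Set.univ

/-- `R'` is a submodel of `R`. -/
def Submodel {U V : Type*} {Val : V → Type*} (R' R : RCM U V Val) : Prop :=
  R'.O ⊆ R.O ∧ (∀ o ∈ R'.O, R'.F o = R.F o) ∧ R'.P = R.P

/- LATE setting: variables `Fin 3` (`0 = Z` the assignment, `1 = X` the
treatment, `2 = Y` the outcome), all binary. -/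

/-- The empty intervention. -/
def e3 : Itv (Fin 3) (fun _ => Fin 2) := fun _ => none

/-- Intervention `Z = z`. -/
noncomputable def iZ (z : Fin 2) : Itv (Fin 3) (fun _ => Fin 2) := upd e3 0 z

/-- Intervention `X = x`. -/
noncomputable def iX (x : Fin 2) : Itv (Fin 3) (fun _ => Fin 2) := upd e3 1 x

/-- Intervention `Z = z, X = x`. -/
noncomputable def iZX (z x : Fin 2) : Itv (Fin 3) (fun _ => Fin 2) := upd (iZ z) 1 x

/-- The potential outcome `X_z(u)`. -/
noncomputable def XF {U : Type*} (R : RCM U (Fin 3) (fun _ => Fin 2)) (z : Fin 2)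
    (u : U) : Fin 2 := R.F ⟨1, iZ z⟩ u

/-- The potential outcome `Y_x(u)`. -/
noncomputable def YX {U : Type*} (R : RCM U (Fin 3) (fun _ => Fin 2)) (x : Fin 2)
    (u : U) : Fin 2 := R.F ⟨2, iX x⟩ u

/-- The potential outcome `Y_{z,x}(u)`. -/
noncomputable def YZX {U : Type*} (R : RCM U (Fin 3) (fun _ => Fin 2)) (z x : Fin 2)
    (u : U) : Fin 2 := R.F ⟨2, iZX z x⟩ u

/-- The potential outcome `Y_z(u)`. -/
noncomputable def YZ {U : Type*} (R : RCM U (Fin 3) (fun _ => Fin 2)) (z : Fin 2)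
    (u : U) : Fin 2 := R.F ⟨2, iZ z⟩ u

/-- The local average treatment effect
`E(Y_{X=1} − Y_{X=0} | X_{Z=1} = 1 ∧ X_{Z=0} = 0)`. -/
noncomputable def LATE {U : Type*} (R : RCM U (Fin 3) (fun _ => Fin 2)) : ℝ :=
  (∑ᶠ u, if XF R 1 u = 1 ∧ XF R 0 u = 0 then
      R.P u * (((YX R 1 u).val : ℝ) - ((YX R 0 u).val : ℝ)) else 0) /
  (∑ᶠ u, if XF R 1 u = 1 ∧ XF R 0 u = 0 then R.P u else 0)

/-- `ITT₂ = E(X_{Z=1} − X_{Z=0})`. -/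
noncomputable def ITT2 {U : Type*} (R : RCM U (Fin 3) (fun _ => Fin 2)) : ℝ :=
  ∑ᶠ u, R.P u * (((XF R 1 u).val : ℝ) - ((XF R 0 u).val : ℝ))

/-- `ITT₁ = E(Y_{Z=1, X_{Z=1}} − Y_{Z=0, X_{Z=0}})`. -/
noncomputable def ITT1 {U : Type*} (R : RCM U (Fin 3) (fun _ => Fin 2)) : ℝ :=
  ∑ᶠ u, R.P u *
    (((YZX R 1 (XF R 1 u) u).val : ℝ) - ((YZX R 0 (XF R 0 u) u).val : ℝ))

/-- Monotonicity, exclusion restriction, and outcome decomposition jointly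
entail `LATE · ITT₂ = ITT₁`. -/
theorem stmt12 {U : Type} [Finite U] (R : RCM U (Fin 3) (fun _ => Fin 2))
    (hO : ∀ z x : Fin 2,
      (⟨1, iZ z⟩ : PO (Fin 3) (fun _ => Fin 2)) ∈ R.O ∧
      (⟨2, iZX z x⟩ : PO (Fin 3) (fun _ => Fin 2)) ∈ R.O ∧
      (⟨2, iX x⟩ : PO (Fin 3) (fun _ => Fin 2)) ∈ R.O)
    (hEff : R.Effective)
    (hMono : ∀ u, XF R 0 u = 1 → XF R 1 u = 1)
    (hER : ∀ u x, YZX R 0 x u = YZX R 1 x u)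
    (hOD : ∀ u x, YX R x u = YZX R 1 x u) :
    LATE R * ITT2 R = ITT1 R := by
  classical
  have _inst := Fintype.ofFinite U
  have key : ∀ u, R.P u *
      (((YZX R 1 (XF R 1 u) u).val : ℝ) - ((YZX R 0 (XF R 0 u) u).val : ℝ))
      = if XF R 1 u = 1 ∧ XF R 0 u = 0 then
          R.P u * (((YX R 1 u).val : ℝ) - ((YX R 0 u).val : ℝ)) else 0 := by
    intro u
    have e1 : ∀ x, YZX R 1 x u = YX R x u := fun x => (hOD u x).symm
    have e0 : ∀ x, YZX R 0 x u = YX R x u := fun x => (hER u x).trans (hOD u x).symm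
    rw [e1, e0]
    have h1 : XF R 1 u = 0 ∨ XF R 1 u = 1 := by omega
    have h0 : XF R 0 u = 0 ∨ XF R 0 u = 1 := by omega
    rcases h1 with h1 | h1 <;> rcases h0 with h0 | h0 <;>
      simp [h1, h0]
    exact absurd (hMono u h0) (by rw [h1]; decide)
  have key2 : ∀ u, R.P u * (((XF R 1 u).val : ℝ) - ((XF R 0 u).val : ℝ))
      = if XF R 1 u = 1 ∧ XF R 0 u = 0 then R.P u else 0 := by
    intro u
    have h1 : XF R 1 u = 0 ∨ XF R 1 u = 1 := by omega
    have h0 : XF R 0 u = 0 ∨ XF R 0 u = 1 := by omega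
    rcases h1 with h1 | h1 <;> rcases h0 with h0 | h0 <;>
      simp [h1, h0]
    exact absurd (hMono u h0) (by rw [h1]; decide)
  set N : ℝ := ∑ u, if XF R 1 u = 1 ∧ XF R 0 u = 0 then
      R.P u * (((YX R 1 u).val : ℝ) - ((YX R 0 u).val : ℝ)) else 0 with hN
  set D : ℝ := ∑ u, if XF R 1 u = 1 ∧ XF R 0 u = 0 then R.P u else 0 with hD
  have hITT1 : ITT1 R = N := by
    rw [ITT1, finsum_eq_sum_of_fintype, hN]
    exact Finset.sum_congr rfl fun u _ => key u
  have hITT2 : ITT2 R = D := by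
    rw [ITT2, finsum_eq_sum_of_fintype, hD]
    exact Finset.sum_congr rfl fun u _ => key2 u
  have hLATE : LATE R = N / D := by
    rw [LATE, finsum_eq_sum_of_fintype, finsum_eq_sum_of_fintype]
  rw [hLATE, hITT2, hITT1]
  by_cases hD0 : D = 0
  · have hPz : ∀ u, (if XF R 1 u = 1 ∧ XF R 0 u = 0 then R.P u else 0) = 0 := by
      have := (Finset.sum_eq_zero_iff_of_nonneg (fun u _ => by
        by_cases h : XF R 1 u = 1 ∧ XF R 0 u = 0 <;> simp [h, R.P_nonneg u])).mp hD0
      exact fun u => this u (Finset.mem_univ u)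
    have hN0 : N = 0 := by
      rw [hN]
      apply Finset.sum_eq_zero
      intro u _
      by_cases h : XF R 1 u = 1 ∧ XF R 0 u = 0
      · have := hPz u
        simp [h] at this ⊢
        simp [this]
      · simp [h]
    simp [hD0, hN0]
  · field_simp
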